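/- Let ν > 0 and define F(m) = ν⁻¹ · (Γ(ν+1/2)/(√π Γ(ν))) · Γ(m+2ν)/(Γ(m+1)Γ(2ν)) for m ∈ [1,∞). Then for each α ∈ ℕ there exists C > 0 such that |∂ₘ^α F(m)| ≤ C m^{2ν-1-α} for all m ≥ 1. -/

import Mathlib

/-- `F(m) = ν⁻¹ (Γ(ν+1/2)/(√π Γ(ν))) Γ(m+2ν)/(Γ(m+1)Γ(2ν))`. -/
noncomputable def Fnu (ν : ℝ) (m : ℝ) : ℝ :=
  ν⁻¹ * (Real.Gamma (ν + 1 / 2) / (Real.sqrt Real.pi * Real.Gamma ν)) *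
    (Real.Gamma (m + 2 * ν) / (Real.Gamma (m + 1) * Real.Gamma (2 * ν)))

/-!
Write `2ν = n + θ` with `n ∈ ℕ` and `0 ≤ θ < 1`. Then
`Γ(m + 2ν) / Γ(m + 1) = (m + θ) ⋯ (m + θ + n - 1) · Γ(m + θ) / Γ(m + 1)`, and the Beta integral
with `t = e^{-s}` gives `Γ(1 - θ) Γ(m + θ) / Γ(m + 1) = ∫₀^∞ e^{-(m+θ)s} (1 - e^{-s})^{-θ} ds`.
Differentiating `k` times under the integral and using `1 - e^{-s} ≥ s e^{-s}` bounds the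
`k`-th derivative by `∫₀^∞ s^{k-θ} e^{-ms} ds = Γ(k + 1 - θ) m^{θ-1-k}`. By Leibniz's rule each
linear factor `m + c` then raises the order of these bounds by one.
-/

open Real Set MeasureTheory Filter Topology

lemma mul_exp_neg_le_one_sub_exp_neg (s : ℝ) : s * exp (-s) ≤ 1 - exp (-s) := by
  have h := mul_le_mul_of_nonneg_right (add_one_le_exp s) (exp_pos (-s)).le
  rw [← exp_add, add_neg_cancel, exp_zero] at h
  linarith

lemma one_sub_exp_neg_pos {s : ℝ} (hs : 0 < s) : 0 < 1 - exp (-s) :=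
  (mul_pos hs (exp_pos _)).trans_le (mul_exp_neg_le_one_sub_exp_neg s)

lemma integrableOn_rpow_mul_exp_neg_mul {a r : ℝ} (ha : -1 < a) (hr : 0 < r) :
    IntegrableOn (fun s : ℝ => s ^ a * exp (-(r * s))) (Ioi 0) := by
  simpa using integrableOn_rpow_mul_exp_neg_mul_rpow ha zero_lt_one hr

lemma integral_rpow_mul_one_sub_rpow {u v : ℝ} (hu : 0 < u) (hv : 0 < v) :
    ∫ t in Ioo 0 1, t ^ (u - 1) * (1 - t) ^ (v - 1) = Gamma u * Gamma v / Gamma (u + v) := by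
  have hB := ProbabilityTheory.beta_pos hu hv
  have h := ProbabilityTheory.lintegral_betaPDF_eq_one hu hv
  rw [ProbabilityTheory.lintegral_betaPDF, ← ENNReal.toReal_eq_one_iff,
    ← integral_eq_lintegral_of_nonneg_ae] at h
  · simp_rw [mul_assoc, integral_const_mul, one_div] at h
    exact ((inv_mul_eq_one₀ hB.ne').mp h).symm
  · refine ae_restrict_of_forall_mem measurableSet_Ioo fun t ⟨ht0, ht1⟩ => ?_
    have := sub_pos.mpr ht1
    positivity
  · fun_prop

lemma image_exp_neg_Ioi_zero : (fun s => exp (-s)) '' Ioi 0 = Ioo 0 1 := by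
  rw [show (fun s => exp (-s)) = exp ∘ Neg.neg from rfl, image_comp, image_neg_Ioi, neg_zero,
    image_exp_Iio, exp_zero]

lemma integral_Ioi_exp_neg_mul_comp_exp_neg (g : ℝ → ℝ) :
    ∫ s in Ioi 0, exp (-s) * g (exp (-s)) = ∫ t in Ioo 0 1, g t := by
  rw [← image_exp_neg_Ioi_zero, integral_image_eq_integral_abs_deriv_smul measurableSet_Ioi
    (fun s _ => (hasDerivAt_neg s).exp.hasDerivWithinAt)
    (fun x _ y _ h => neg_injective (exp_injective h))]
  simp [abs_of_pos (exp_pos _)]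

structure IsSymbolFamily (e : ℝ) (D : ℕ → ℝ → ℝ) : Prop where
  hasDerivAt : ∀ k m, 0 < m → HasDerivAt (D k) (D (k + 1) m) m
  bound : ∀ k, ∃ C, ∀ m, 1 ≤ m → |D k m| ≤ C * m ^ (e - k)

lemma iteratedDeriv_eqOn_of_hasDerivAt {f : ℝ → ℝ} {D : ℕ → ℝ → ℝ}
    (hD : ∀ k m, 0 < m → HasDerivAt (D k) (D (k + 1) m) m) (hf : EqOn f (D 0) (Ioi 0)) (k : ℕ) :
    EqOn (iteratedDeriv k f) (D k) (Ioi 0) := by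
  induction k with
  | zero => simpa using hf
  | succ k ih =>
    intro m hm
    rw [iteratedDeriv_succ, (ih.eventuallyEq_of_mem (isOpen_Ioi.mem_nhds hm)).deriv_eq]
    exact (hD k m hm).deriv

namespace IsSymbolFamily

variable {e : ℝ} {D : ℕ → ℝ → ℝ}

lemma const_mul (hD : IsSymbolFamily e D) (c : ℝ) : IsSymbolFamily e fun k m => c * D k m where
  hasDerivAt k m hm := (hD.hasDerivAt k m hm).const_mul c
  bound k := by
    obtain ⟨C, hC⟩ := hD.bound k
    refine ⟨|c| * C, fun m hm => ?_⟩
    rw [abs_mul, mul_assoc]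
    exact mul_le_mul_of_nonneg_left (hC m hm) (abs_nonneg c)

/-- At `k = 0` the truncated `k - 1` is harmless: that term carries the factor `0`. -/
lemma linear_mul (hD : IsSymbolFamily e D) (c : ℝ) :
    IsSymbolFamily (e + 1) fun k m => (m + c) * D k m + k * D (k - 1) m where
  hasDerivAt k m hm := by
    have hlin : HasDerivAt (fun x => k * D (k - 1) x) (k * D k m) m := by
      rcases k with _ | k
      · simpa using hasDerivAt_const m (0 : ℝ)
      · exact (hD.hasDerivAt k m hm).const_mul _
    refine ((((hasDerivAt_id' m).add_const c).mul (hD.hasDerivAt k m hm)).add hlin).congr_deriv ?_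
    rw [Nat.add_sub_cancel]
    push_cast
    ring
  bound k := by
    obtain ⟨C₁, hC₁⟩ := hD.bound k
    obtain ⟨C₂, hC₂⟩ := hD.bound (k - 1)
    refine ⟨(1 + |c|) * C₁ + k * C₂, fun m hm => ?_⟩
    have hm0 : 0 < m := by linarith
    have hmc : |m + c| ≤ (1 + |c|) * m := by
      have := abs_add_le m c
      rw [abs_of_pos hm0] at this
      nlinarith [abs_nonneg c]
    have h₁ : |(m + c) * D k m| ≤ (1 + |c|) * C₁ * m ^ (e + 1 - k) := by
      rw [abs_mul, show e + 1 - k = (e - k) + 1 by ring, rpow_add_one hm0.ne']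
      calc |m + c| * |D k m| ≤ (1 + |c|) * m * (C₁ * m ^ (e - k)) :=
            mul_le_mul hmc (hC₁ m hm) (abs_nonneg _) (by positivity)
        _ = _ := by ring
    have h₂ : |(k : ℝ) * D (k - 1) m| ≤ k * C₂ * m ^ (e + 1 - k) := by
      rcases k with _ | k
      · simp
      · have := hC₂ m hm
        push_cast at this ⊢
        rw [abs_mul, abs_of_nonneg (by positivity : (0 : ℝ) ≤ k + 1), mul_assoc,
          show e + 1 - (k + 1) = e - k by ring]
        exact mul_le_mul_of_nonneg_left this (by positivity)
    calc _ ≤ |(m + c) * D k m| + |(k : ℝ) * D (k - 1) m| := abs_add_le _ _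
      _ ≤ _ := by linarith

end IsSymbolFamily

noncomputable def gammaRatioKernel (θ : ℝ) (k : ℕ) (m s : ℝ) : ℝ :=
  (-s) ^ k * exp (-((m + θ) * s)) * (1 - exp (-s)) ^ (-θ)

noncomputable def gammaRatioIntegral (θ : ℝ) (k : ℕ) (m : ℝ) : ℝ :=
  ∫ s in Ioi 0, gammaRatioKernel θ k m s

lemma continuousOn_gammaRatioKernel (θ : ℝ) (k : ℕ) (m : ℝ) :
    ContinuousOn (gammaRatioKernel θ k m) (Ioi 0) := fun s hs =>
  (ContinuousAt.mul (by fun_prop)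
    ((continuous_const.sub (continuous_exp.comp continuous_neg)).continuousAt.rpow_const
      (Or.inl (one_sub_exp_neg_pos hs).ne'))).continuousWithinAt

lemma hasDerivAt_gammaRatioKernel (θ : ℝ) (k : ℕ) (m s : ℝ) :
    HasDerivAt (gammaRatioKernel θ k · s) (gammaRatioKernel θ (k + 1) m s) m := by
  have h : HasDerivAt (fun x => -((x + θ) * s)) (-(1 * s)) m :=
    (((hasDerivAt_id' m).add_const θ).mul_const s).neg
  exact ((h.exp.const_mul ((-s) ^ k)).mul_const ((1 - exp (-s)) ^ (-θ))).congr_deriv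
    (by rw [gammaRatioKernel, pow_succ]; ring)

lemma abs_gammaRatioKernel_le {θ r m s : ℝ} (hθ : 0 ≤ θ) (hrm : r ≤ m) (hs : 0 < s) (k : ℕ) :
    |gammaRatioKernel θ k m s| ≤ s ^ ((k : ℝ) - θ) * exp (-(r * s)) := by
  have h₁ : (1 - exp (-s)) ^ (-θ) ≤ s ^ (-θ) * exp (θ * s) := by
    calc (1 - exp (-s)) ^ (-θ) ≤ (s * exp (-s)) ^ (-θ) :=
          rpow_le_rpow_of_nonpos (by positivity) (mul_exp_neg_le_one_sub_exp_neg s)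
            (neg_nonpos.mpr hθ)
      _ = s ^ (-θ) * exp (θ * s) := by
          rw [mul_rpow hs.le (exp_pos _).le, ← exp_mul]; ring_nf
  have h₂ : exp (-((m + θ) * s)) * exp (θ * s) ≤ exp (-(r * s)) := by
    rw [← exp_add]; gcongr; nlinarith
  have hsk : |(-s) ^ k| = s ^ (k : ℝ) := by rw [abs_pow, abs_neg, abs_of_pos hs, rpow_natCast]
  rw [gammaRatioKernel, abs_mul, abs_mul, hsk, abs_of_pos (exp_pos _),
    abs_of_pos (rpow_pos_of_pos (one_sub_exp_neg_pos hs) _),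
    show (k : ℝ) - θ = k + -θ by ring, rpow_add hs]
  calc s ^ (k : ℝ) * exp (-((m + θ) * s)) * (1 - exp (-s)) ^ (-θ)
      ≤ s ^ (k : ℝ) * exp (-((m + θ) * s)) * (s ^ (-θ) * exp (θ * s)) := by gcongr
    _ = s ^ (k : ℝ) * s ^ (-θ) * (exp (-((m + θ) * s)) * exp (θ * s)) := by ring
    _ ≤ s ^ (k : ℝ) * s ^ (-θ) * exp (-(r * s)) := by gcongr

lemma integrableOn_gammaRatioKernel {θ m : ℝ} (hθ0 : 0 ≤ θ) (hθ1 : θ < 1) (hm : 0 < m) (k : ℕ) :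
    IntegrableOn (gammaRatioKernel θ k m) (Ioi 0) :=
  (integrableOn_rpow_mul_exp_neg_mul (by linarith [k.cast_nonneg (α := ℝ)]) hm).mono'
    ((continuousOn_gammaRatioKernel θ k m).aestronglyMeasurable measurableSet_Ioi)
    ((ae_restrict_iff' measurableSet_Ioi).mpr
      (ae_of_all _ fun s hs => abs_gammaRatioKernel_le hθ0 le_rfl hs k))

lemma hasDerivAt_gammaRatioIntegral {θ m : ℝ} (hθ0 : 0 ≤ θ) (hθ1 : θ < 1) (hm : 0 < m) (k : ℕ) :
    HasDerivAt (gammaRatioIntegral θ k) (gammaRatioIntegral θ (k + 1) m) m := by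
  refine (hasDerivAt_integral_of_dominated_loc_of_deriv_le (Metric.ball_mem_nhds m (half_pos hm))
    (Eventually.of_forall fun x =>
      (continuousOn_gammaRatioKernel θ k x).aestronglyMeasurable measurableSet_Ioi)
    (integrableOn_gammaRatioKernel hθ0 hθ1 hm k)
    ((continuousOn_gammaRatioKernel θ (k + 1) m).aestronglyMeasurable measurableSet_Ioi)
    ((ae_restrict_iff' measurableSet_Ioi).mpr (ae_of_all _ fun s hs x hx => ?_))
    (integrableOn_rpow_mul_exp_neg_mul (r := m / 2)
      (by linarith [k.cast_nonneg (α := ℝ)] : -1 < ((k + 1 : ℕ) : ℝ) - θ) (half_pos hm))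
    (ae_of_all _ fun s x _ => hasDerivAt_gammaRatioKernel θ k x s)).2
  rw [Metric.mem_ball, Real.dist_eq, abs_lt] at hx
  exact abs_gammaRatioKernel_le hθ0 (by linarith) hs (k + 1)

lemma abs_gammaRatioIntegral_le {θ m : ℝ} (hθ0 : 0 ≤ θ) (hθ1 : θ < 1) (hm : 0 < m) (k : ℕ) :
    |gammaRatioIntegral θ k m| ≤ Gamma (k + 1 - θ) * m ^ (θ - 1 - k) := by
  have ha : 0 < (k : ℝ) + 1 - θ := by linarith [k.cast_nonneg (α := ℝ)]
  calc |gammaRatioIntegral θ k m|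
      ≤ ∫ s in Ioi 0, s ^ ((k : ℝ) + 1 - θ - 1) * exp (-(m * s)) := by
        refine abs_integral_le_integral_abs.trans (setIntegral_mono_on
          (integrableOn_gammaRatioKernel hθ0 hθ1 hm k).abs
          (integrableOn_rpow_mul_exp_neg_mul (by linarith) hm) measurableSet_Ioi fun s hs => ?_)
        rw [show (k : ℝ) + 1 - θ - 1 = k - θ by ring]
        exact abs_gammaRatioKernel_le hθ0 le_rfl hs k
    _ = Gamma (k + 1 - θ) * m ^ (θ - 1 - k) := by
        rw [integral_rpow_mul_exp_neg_mul_Ioi ha hm, one_div, inv_rpow hm.le, ← rpow_neg hm.le,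
          mul_comm]
        ring_nf

lemma gammaRatioIntegral_zero {θ m : ℝ} (hθm : 0 < m + θ) (hθ1 : θ < 1) :
    gammaRatioIntegral θ 0 m = Gamma (m + θ) * Gamma (1 - θ) / Gamma (m + 1) := by
  have h := integral_rpow_mul_one_sub_rpow hθm (sub_pos.mpr hθ1)
  rw [show m + θ + (1 - θ) = m + 1 by ring, show 1 - θ - 1 = -θ by ring] at h
  rw [← h, ← integral_Ioi_exp_neg_mul_comp_exp_neg, gammaRatioIntegral]
  refine setIntegral_congr_fun measurableSet_Ioi fun s _ => ?_
  rw [gammaRatioKernel, pow_zero, one_mul, ← exp_mul, ← mul_assoc, ← exp_add]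
  ring_nf

lemma isSymbolFamily_gammaRatioIntegral {θ : ℝ} (hθ0 : 0 ≤ θ) (hθ1 : θ < 1) :
    IsSymbolFamily (θ - 1) (gammaRatioIntegral θ) where
  hasDerivAt k _ hm := hasDerivAt_gammaRatioIntegral hθ0 hθ1 hm k
  bound k := ⟨Gamma (k + 1 - θ), fun _ hm => abs_gammaRatioIntegral_le hθ0 hθ1 (by linarith) k⟩

lemma exists_isSymbolFamily_Gamma_add_div_Gamma_add_one {a : ℝ} (ha : 0 ≤ a) :
    ∃ D, IsSymbolFamily (a - 1) D ∧
      EqOn (D 0) (fun m => Gamma (m + a) / Gamma (m + 1)) (Ioi 0) := by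
  set θ := a - ⌊a⌋₊
  have hθ0 : 0 ≤ θ := sub_nonneg.mpr (Nat.floor_le ha)
  have hθ1 : θ < 1 := by linarith [Nat.lt_floor_add_one a]
  suffices ∀ n : ℕ, ∃ D, IsSymbolFamily (θ + n - 1) D ∧
      EqOn (D 0) (fun m => Gamma (m + (θ + n)) / Gamma (m + 1)) (Ioi 0) by
    simpa [θ] using this ⌊a⌋₊
  intro n
  induction n with
  | zero =>
    have hD := (isSymbolFamily_gammaRatioIntegral hθ0 hθ1).const_mul (Gamma (1 - θ))⁻¹
    refine ⟨_, by simpa using hD, fun m hm => ?_⟩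
    have hΓ : Gamma (1 - θ) ≠ 0 := (Gamma_pos_of_pos (sub_pos.mpr hθ1)).ne'
    have hmθ : 0 < m + θ := by linarith [mem_Ioi.mp hm]
    simp only [gammaRatioIntegral_zero hmθ hθ1, Nat.cast_zero, add_zero]
    field_simp
  | succ n ih =>
    obtain ⟨D, hD, hD0⟩ := ih
    have hD' := hD.linear_mul (θ + n)
    rw [show θ + n - 1 + 1 = θ + ↑(n + 1) - 1 by push_cast; ring] at hD'
    refine ⟨_, hD', fun m hm => ?_⟩
    have hpos : 0 < m + (θ + n) := by have := mem_Ioi.mp hm; positivity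
    simp only [hD0 hm, CharP.cast_eq_zero, zero_mul, add_zero]
    rw [show m + (θ + ↑(n + 1)) = m + (θ + n) + 1 by push_cast; ring, Gamma_add_one hpos.ne']
    ring

/-- Symbol-type estimates: `|∂ₘ^α F(m)| ≤ C m^{2ν-1-α}` for `m ≥ 1`. -/
theorem Fnu_iteratedDeriv_bound (ν : ℝ) (hν : 0 < ν) (α : ℕ) :
    ∃ C : ℝ, 0 < C ∧ ∀ m : ℝ, 1 ≤ m →
      |iteratedDeriv α (Fnu ν) m| ≤ C * m ^ (2 * ν - 1 - α) := by
  obtain ⟨D, hD, hD0⟩ :=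
    exists_isSymbolFamily_Gamma_add_div_Gamma_add_one (by positivity : 0 ≤ 2 * ν)
  set c := ν⁻¹ * (Gamma (ν + 1 / 2) / (√π * Gamma ν)) / Gamma (2 * ν)
  have hcD := hD.const_mul c
  have hF : EqOn (Fnu ν) (fun m => c * D 0 m) (Ioi 0) := fun m hm => by
    simp only [Fnu, hD0 hm, c]
    ring
  obtain ⟨C, hC⟩ := hcD.bound α
  refine ⟨max C 1, by positivity, fun m hm => ?_⟩
  rw [iteratedDeriv_eqOn_of_hasDerivAt hcD.hasDerivAt hF α (zero_lt_one.trans_le hm)]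
  calc _ ≤ C * m ^ (2 * ν - 1 - α) := hC m hm
    _ ≤ max C 1 * m ^ (2 * ν - 1 - α) := by gcongr; exact le_max_left C 1
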